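/- For every k ∈ ℕ with k ≥ 2 and every integer D sufficiently large in terms of k there exist a constant c = c(k, D) and n_0 such that for all even n ≥ n_0 the following holds. Let M be a k-configuration of order n, let e = ab be an available edge, let ℓ ≤ n/10, and let T = {e_1, …, e_ℓ} be a red matching none of whose edges is incident to a or b. Let M* be a uniformly random red matching of M of size n/2 − D, and let x, y be two distinct vertices not covered by T. Then the conditional probability P[ xy ∈ M* | a, b ∉ V(M*) and T ⊆ M* ] ≤ c/n. -/

import Mathlib

open scoped Classical

namespace Kotzig

variable {V : Type}

/-- The set of vertices covered by a set of edges. -/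
def covered (M : Set (Sym2 V)) : Set V := {v | ∃ e ∈ M, v ∈ e}

/-- A set of unordered pairs of vertices is a matching: its elements are non-loops and
pairwise vertex-disjoint. -/
def IsMatchingE (M : Set (Sym2 V)) : Prop :=
  (∀ e ∈ M, ¬ e.IsDiag) ∧
    ∀ e ∈ M, ∀ f ∈ M, e ≠ f → ∀ v : V, v ∈ e → v ∉ f

/-- A perfect matching on the vertex set `V`. -/
def IsPerfectMatchingE (M : Set (Sym2 V)) : Prop :=
  IsMatchingE M ∧ ∀ v : V, v ∈ covered M

/-- `M ∪ M'` forms a Hamilton cycle. -/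
def UnionHam [Fintype V] (M M' : Set (Sym2 V)) : Prop :=
  (SimpleGraph.fromEdgeSet (M ∪ M')).IsHamiltonian

/-- A `k`-configuration: `k` perfect matchings (colours) on a common vertex set. -/
def IsConfig {k : ℕ} (Mc : Fin k → Set (Sym2 V)) : Prop :=
  ∀ i, IsPerfectMatchingE (Mc i)

/-- A pair of vertices forms an available edge if it is an edge of none of the matchings. -/
def Available {k : ℕ} (Mc : Fin k → Set (Sym2 V)) (e : Sym2 V) : Prop :=
  ¬ e.IsDiag ∧ ∀ i, e ∉ Mc i

/-- A (partial) red matching of a configuration: a matching of available edges whose union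
with each colour contains no cycle. -/
def IsRedMatching {k : ℕ} (Mc : Fin k → Set (Sym2 V)) (M : Set (Sym2 V)) : Prop :=
  IsMatchingE M ∧ (∀ e ∈ M, Available Mc e) ∧
    ∀ i, (SimpleGraph.fromEdgeSet (M ∪ Mc i)).IsAcyclic

/-- A red perfect matching: a perfect matching forming a Hamilton cycle with each colour. -/
def IsRedPerfectMatching [Fintype V] {k : ℕ} (Mc : Fin k → Set (Sym2 V))
    (M : Set (Sym2 V)) : Prop :=
  IsPerfectMatchingE M ∧ ∀ i, UnionHam M (Mc i)

/-- The colour-`i` matching of the reduced configuration of the red matching `M`, where `Mi`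
is the colour-`i` matching: two distinct vertices uncovered by `M` are joined precisely when
the maximal path alternating between `Mi` and `M` starting at one ends at the other,
equivalently (as `M ∪ Mi` is an acyclic union of a matching and a perfect matching)
when they lie in the same connected component of `Mi ∪ M`. -/
def reducedColour (Mi M : Set (Sym2 V)) : Set (Sym2 V) :=
  {e | ∃ u v : V, e = s(u, v) ∧ u ≠ v ∧ u ∉ covered M ∧ v ∉ covered M ∧
    (SimpleGraph.fromEdgeSet (Mi ∪ M)).Reachable u v}

/-- The total overlap of a configuration: `Σ_{i ≠ j} |M_i ∩ M_j|` over ordered pairs. -/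
noncomputable def totalOverlap {k : ℕ} (Mc : Fin k → Set (Sym2 V)) : ℕ :=
  ∑ i : Fin k, ∑ j : Fin k, if i ≠ j then (Mc i ∩ Mc j).ncard else 0

/-- The total overlap of the reduced configuration of the red matching `M`. -/
noncomputable def reducedOverlap {k : ℕ} (Mc : Fin k → Set (Sym2 V)) (M : Set (Sym2 V)) : ℕ :=
  totalOverlap (fun i => reducedColour (Mc i) M)


section Aux

lemma matching_unique {M : Set (Sym2 V)} (hM : IsMatchingE M) {v u₁ u₂ : V}
    (h1 : s(v, u₁) ∈ M) (h2 : s(v, u₂) ∈ M) : u₁ = u₂ := by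
  by_cases h : s(v, u₁) = s(v, u₂)
  · rw [Sym2.eq_iff] at h
    rcases h with ⟨-, h⟩ | ⟨h1', h2'⟩
    · exact h
    · rw [h2', h1']
  · exact absurd (Sym2.mem_mk_left v u₂) (hM.2 _ h1 _ h2 h v (Sym2.mem_mk_left v u₁))

lemma matching_subset {M M' : Set (Sym2 V)} (hM : IsMatchingE M) (h : M' ⊆ M) :
    IsMatchingE M' :=
  ⟨fun e he => hM.1 e (h he), fun e he f hf hef v hv => hM.2 e (h he) f (h hf) hef v hv⟩

lemma covered_mono {M M' : Set (Sym2 V)} (h : M' ⊆ M) : covered M' ⊆ covered M :=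
  fun _ ⟨e, he, hv⟩ => ⟨e, h he, hv⟩

lemma mem_covered_of_mem {M : Set (Sym2 V)} {e : Sym2 V} {v : V} (he : e ∈ M) (hv : v ∈ e) :
    v ∈ covered M := ⟨e, he, hv⟩

lemma union_matchings_deg {M1 M2 : Set (Sym2 V)} (h1 : IsMatchingE M1) (h2 : IsMatchingE M2)
    {v a b c : V} (ha : (SimpleGraph.fromEdgeSet (M1 ∪ M2)).Adj v a)
    (hb : (SimpleGraph.fromEdgeSet (M1 ∪ M2)).Adj v b)
    (hc : (SimpleGraph.fromEdgeSet (M1 ∪ M2)).Adj v c) :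
    a = b ∨ b = c ∨ a = c := by
  rw [SimpleGraph.fromEdgeSet_adj] at ha hb hc
  rcases ha.1 with ha1 | ha1 <;> rcases hb.1 with hb1 | hb1 <;> rcases hc.1 with hc1 | hc1
  · exact Or.inl (matching_unique h1 ha1 hb1)
  · exact Or.inl (matching_unique h1 ha1 hb1)
  · exact Or.inr (Or.inr (matching_unique h1 ha1 hc1))
  · exact Or.inr (Or.inl (matching_unique h2 hb1 hc1))
  · exact Or.inr (Or.inl (matching_unique h1 hb1 hc1))
  · exact Or.inr (Or.inr (matching_unique h2 ha1 hc1))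
  · exact Or.inl (matching_unique h2 ha1 hb1)
  · exact Or.inl (matching_unique h2 ha1 hb1)

lemma leaf_of_uncovered {M1 M2 : Set (Sym2 V)} (h2 : IsMatchingE M2) {v : V}
    (hv : v ∉ covered M1) {a b : V}
    (ha : (SimpleGraph.fromEdgeSet (M1 ∪ M2)).Adj v a)
    (hb : (SimpleGraph.fromEdgeSet (M1 ∪ M2)).Adj v b) : a = b := by
  rw [SimpleGraph.fromEdgeSet_adj] at ha hb
  rcases ha.1 with ha1 | ha1
  · exact absurd (mem_covered_of_mem ha1 (Sym2.mem_mk_left v a)) hv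
  rcases hb.1 with hb1 | hb1
  · exact absurd (mem_covered_of_mem hb1 (Sym2.mem_mk_left v b)) hv
  exact matching_unique h2 ha1 hb1

lemma aux_no_three (G : SimpleGraph V)
    (hdeg : ∀ v a b c : V, G.Adj v a → G.Adj v b → G.Adj v c → a = b ∨ b = c ∨ a = c)
    {w₁ w₂ : V} (hne : w₁ ≠ w₂)
    (h₁ : ∀ a b, G.Adj w₁ a → G.Adj w₁ b → a = b)
    (h₂ : ∀ a b, G.Adj w₂ a → G.Adj w₂ b → a = b) :
    ∀ n (c b : V) (p₁ : G.Walk c w₁) (p₂ : G.Walk c w₂), p₁.length + p₂.length ≤ n →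
      p₁.IsPath → p₂.IsPath → G.Adj c b → b ∉ p₁.support → b ∉ p₂.support → False := by
  intro n
  induction n with
  | zero =>
    intro c b p₁ p₂ hlen hp₁ hp₂ hadj hb₁ hb₂
    have h1 : p₁.length = 0 := by omega
    have h2 : p₂.length = 0 := by omega
    exact hne ((SimpleGraph.Walk.eq_of_length_eq_zero h1).symm.trans
      (SimpleGraph.Walk.eq_of_length_eq_zero h2))
  | succ n ih =>
    intro c b p₁ p₂ hlen hp₁ hp₂ hadj hb₁ hb₂
    cases p₁ with
    | nil =>
      cases p₂ with
      | nil => exact hne rfl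
      | cons a₂ q₂ =>
        rename_i s₂
        have : b = s₂ := h₁ b s₂ hadj a₂
        exact hb₂ (by
          rw [SimpleGraph.Walk.support_cons]
          exact List.mem_cons_of_mem _ (this ▸ q₂.start_mem_support))
    | cons a₁ q₁ =>
      rename_i s₁
      cases p₂ with
      | nil =>
        have : b = s₁ := h₂ b s₁ hadj a₁
        exact hb₁ (by
          rw [SimpleGraph.Walk.support_cons]
          exact List.mem_cons_of_mem _ (this ▸ q₁.start_mem_support))
      | cons a₂ q₂ =>
        rename_i s₂
        rcases hdeg c s₁ s₂ b a₁ a₂ hadj with h | h | h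
        · subst h
          rw [SimpleGraph.Walk.cons_isPath_iff] at hp₁ hp₂
          refine ih s₁ c q₁ q₂ ?_ hp₁.1 hp₂.1 a₁.symm hp₁.2 hp₂.2
          simp only [SimpleGraph.Walk.length_cons] at hlen
          omega
        · exact hb₂ (by
            rw [SimpleGraph.Walk.support_cons]
            exact List.mem_cons_of_mem _ (h ▸ q₂.start_mem_support))
        · exact hb₁ (by
            rw [SimpleGraph.Walk.support_cons]
            exact List.mem_cons_of_mem _ (h ▸ q₁.start_mem_support))

lemma no_three_leaves (G : SimpleGraph V)
    (hdeg : ∀ v a b c : V, G.Adj v a → G.Adj v b → G.Adj v c → a = b ∨ b = c ∨ a = c)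
    {x w₁ w₂ : V} (hx1 : x ≠ w₁) (hx2 : x ≠ w₂) (hne : w₁ ≠ w₂)
    (hx : ∀ a b, G.Adj x a → G.Adj x b → a = b)
    (h₁ : ∀ a b, G.Adj w₁ a → G.Adj w₁ b → a = b)
    (h₂ : ∀ a b, G.Adj w₂ a → G.Adj w₂ b → a = b)
    (hr₁ : G.Reachable x w₁) (hr₂ : G.Reachable x w₂) : False := by
  obtain ⟨wk₁⟩ := hr₁
  obtain ⟨wk₂⟩ := hr₂
  have hp₁ : wk₁.toPath.1.IsPath := wk₁.toPath.2
  have hp₂ : wk₂.toPath.1.IsPath := wk₂.toPath.2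
  set p₁ := wk₁.toPath.1 with hdef₁
  set p₂ := wk₂.toPath.1 with hdef₂
  clear_value p₁ p₂
  cases p₁ with
  | nil => exact hx1 rfl
  | cons a₁ q₁ =>
    rename_i s₁
    cases p₂ with
    | nil => exact hx2 rfl
    | cons a₂ q₂ =>
      rename_i s₂
      have hs : s₁ = s₂ := hx s₁ s₂ a₁ a₂
      subst hs
      rw [SimpleGraph.Walk.cons_isPath_iff] at hp₁ hp₂
      exact aux_no_three G hdeg hne h₁ h₂ (q₁.length + q₂.length) s₁ x q₁ q₂ le_rfl
        hp₁.1 hp₂.1 a₁.symm hp₁.2 hp₂.2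

lemma acyclic_mono {G H : SimpleGraph V} (hle : G ≤ H) (h : H.IsAcyclic) : G.IsAcyclic := by
  intro v c hc
  exact h (c.mapLe hle) (hc.mapLe hle)

lemma acyclic_insert {S : Set (Sym2 V)} {p q : V} (hpq : p ≠ q)
    (hac : (SimpleGraph.fromEdgeSet S).IsAcyclic)
    (hreach : ¬(SimpleGraph.fromEdgeSet S).Reachable p q) :
    (SimpleGraph.fromEdgeSet (insert s(p, q) S)).IsAcyclic := by
  intro v c hc
  by_cases he : s(p, q) ∈ c.edges
  · have hadj : (SimpleGraph.fromEdgeSet (insert s(p, q) S)).Adj p q := by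
      rw [SimpleGraph.fromEdgeSet_adj]
      exact ⟨Set.mem_insert _ _, hpq⟩
    have hnb : ¬(SimpleGraph.fromEdgeSet (insert s(p, q) S)).IsBridge s(p, q) := by
      rw [SimpleGraph.isBridge_iff_adj_and_forall_cycle_notMem]
      push_neg
      exact ⟨v, c, hc, he⟩
      exact hadj
    rw [SimpleGraph.isBridge_iff] at hnb
    push_neg at hnb
    have hr := hnb
    refine hreach (hr.mono ?_)
    intro u w huw
    simp only [SimpleGraph.deleteEdges_adj, SimpleGraph.sdiff_adj, SimpleGraph.fromEdgeSet_adj, Set.mem_insert_iff] at huw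
    obtain ⟨⟨hm | hm, hne⟩, hnot⟩ := huw
    · exact absurd (Set.mem_singleton_iff.2 hm) hnot
    · rw [SimpleGraph.fromEdgeSet_adj]
      exact ⟨hm, hne⟩
  · have hE : ∀ e ∈ c.edges, e ∈ (SimpleGraph.fromEdgeSet S).edgeSet := by
      intro e heE
      have := c.edges_subset_edgeSet heE
      rw [SimpleGraph.edgeSet_fromEdgeSet] at this ⊢
      rcases this with ⟨hmem, hdiag⟩
      rcases Set.mem_insert_iff.1 hmem with h | h
      · exact absurd (h ▸ heE) he
      · exact ⟨h, hdiag⟩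
    exact hac (c.transfer _ hE) (hc.transfer hE)

lemma covered_insert (e : Sym2 V) (M : Set (Sym2 V)) :
    covered (insert e M) = {v | v ∈ e} ∪ covered M := by
  ext v
  simp [covered, Set.mem_insert_iff, or_and_right, exists_or]

lemma covered_ncard [Fintype V] {M : Set (Sym2 V)} (hM : IsMatchingE M) :
    (covered M).ncard = 2 * M.ncard := by
  refine Set.Finite.induction_on
    (motive := fun M _ => IsMatchingE M → (covered M).ncard = 2 * M.ncard)
    M (Set.toFinite M) (fun _ => by simp [covered]) ?_ hM
  clear hM
  intro e M heM hMfin ih hM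
  rw [covered_insert, Set.ncard_union_eq ?_ (Set.toFinite _) (Set.toFinite _),
    ih (matching_subset hM (Set.subset_insert _ _)), Set.ncard_insert_of_notMem heM hMfin]
  · have hd : ¬ e.IsDiag := hM.1 e (Set.mem_insert _ _)
    induction e using Sym2.ind with
    | _ p q =>
      have hpq : p ≠ q := fun h => hd (by simp [h])
      have : {v | v ∈ s(p, q)} = ({p, q} : Set V) := by
        ext v; simp [Sym2.mem_iff]
      rw [this, Set.ncard_pair hpq]
      ring
  · rw [Set.disjoint_left]
    rintro v hv ⟨f, hf, hvf⟩
    have hef : e ≠ f := fun h => heM (h ▸ hf)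
    exact hM.2 e (Set.mem_insert _ _) f (Set.mem_insert_of_mem _ hf) hef v hv hvf

lemma insert_matching {M : Set (Sym2 V)} (hM : IsMatchingE M) {p q : V}
    (hp : p ∉ covered M) (hq : q ∉ covered M) (hpq : p ≠ q) :
    IsMatchingE (insert s(p, q) M) := by
  constructor
  · intro e he
    rcases Set.mem_insert_iff.1 he with h | h
    · subst h; simpa using hpq
    · exact hM.1 e h
  · intro e he f hf hef v hv
    rcases Set.mem_insert_iff.1 he with h | h <;> rcases Set.mem_insert_iff.1 hf with h' | h'
    · exact absurd (h.trans h'.symm) hef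
    · subst h
      intro hvf
      rcases Sym2.mem_iff.1 hv with rfl | rfl
      · exact hp (mem_covered_of_mem h' hvf)
      · exact hq (mem_covered_of_mem h' hvf)
    · subst h'
      intro hvf
      rcases Sym2.mem_iff.1 hvf with rfl | rfl
      · exact hp (mem_covered_of_mem h hv)
      · exact hq (mem_covered_of_mem h hv)
    · exact hM.2 e h f h' hef v hv

lemma sym2_count [Fintype V] (U : Set V) :
    {e : Sym2 V | ∀ v ∈ e, v ∈ U}.ncard ≤ U.ncard * U.ncard := by
  have h := Set.ncard_le_ncard_of_injOn (s := {e : Sym2 V | ∀ v ∈ e, v ∈ U})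
    (t := U ×ˢ U) (fun e => (e.out.1, e.out.2)) ?_ ?_ (Set.toFinite _)
  · refine h.trans (le_of_eq ?_)
    rw [← Nat.card_coe_set_eq, ← Nat.card_coe_set_eq U,
      Nat.card_congr (Equiv.Set.prod U U), Nat.card_prod, Nat.card_coe_set_eq]
  · intro e he
    exact Set.mk_mem_prod (he _ (Sym2.out_fst_mem e)) (he _ (Sym2.out_snd_mem e))
  · intro e₁ h₁ e₂ h₂ h
    have h1 : e₁.out = e₂.out := Prod.ext (congrArg Prod.fst h) (congrArg Prod.snd h)
    rw [← e₁.out_eq, ← e₂.out_eq, h1]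

lemma ncard_iUnion_le_two {k : ℕ} [Fintype V] (f : Fin k → Set V)
    (h : ∀ i, (f i).ncard ≤ 2) : (⋃ i, f i).ncard ≤ 2 * k := by
  have heq : (⋃ i, f i) = ↑(Finset.univ.biUnion fun i => (f i).toFinite.toFinset) := by
    ext v
    simp only [Set.mem_iUnion, Finset.coe_biUnion, Finset.coe_univ, Set.mem_univ,
      Set.iUnion_true, Set.Finite.coe_toFinset]
  rw [heq, Set.ncard_coe_finset]
  refine Finset.card_biUnion_le.trans ?_
  have : ∀ i ∈ Finset.univ, ((f i).toFinite.toFinset).card ≤ 2 := by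
    intro i _
    rw [← Set.ncard_eq_toFinset_card]
    exact h i
  refine (Finset.sum_le_sum this).trans ?_
  simp [mul_comm]

end Aux

lemma exchange [Fintype V] {k : ℕ} {Mc : Fin k → Set (Sym2 V)} (hMc : IsConfig Mc)
    {D : ℕ} (hD : 2 * k + 2 ≤ D)
    (heven : Even (Fintype.card V)) (hcard : 2 * D + 4 ≤ Fintype.card V)
    {a b x y : V} (hab : a ≠ b) (hxy : x ≠ y)
    (hxa : x ≠ a) (hxb : x ≠ b) (hya : y ≠ a) (hyb : y ≠ b)
    {T M : Set (Sym2 V)} (hTM : T ⊆ M)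
    (hM : IsRedMatching Mc M) (hMcard : M.ncard = Fintype.card V / 2 - D)
    (haM : a ∉ covered M) (hbM : b ∉ covered M)
    (hxyM : s(x, y) ∈ M) (hxyT : s(x, y) ∉ T)
    {e : Sym2 V} (heM : e ∈ M) (heT : e ∉ T) (hexy : e ≠ s(x, y)) :
    ∃ M' : Set (Sym2 V), (IsRedMatching Mc M' ∧ M'.ncard = Fintype.card V / 2 - D ∧
      a ∉ covered M' ∧ b ∉ covered M' ∧ T ⊆ M') ∧
      (∀ v ∈ e, v ∉ covered M') ∧
      ({f ∈ M' | ¬(x ∈ f ∨ y ∈ f)} ∪ {s(x, y), e} = M) := by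
  revert heM heT hexy
  induction e using Sym2.ind with
  | _ u v =>
  intro heM heT hexy
  have hmatch : IsMatchingE M := hM.1
  have huv : u ≠ v := fun h => hmatch.1 _ heM (by simp [h])
  set M₀ : Set (Sym2 V) := M \ {s(x, y), s(u, v)} with hM₀def
  have hM₀M : M₀ ⊆ M := Set.diff_subset
  have hmatch₀ : IsMatchingE M₀ := matching_subset hmatch hM₀M
  have hxyM₀ : s(x, y) ∉ M₀ := fun h => h.2 (by simp)
  have huvM₀ : s(u, v) ∉ M₀ := fun h => h.2 (by simp)
  have hx0 : x ∉ covered M₀ := by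
    rintro ⟨f, hf, hxf⟩
    have hfne : s(x, y) ≠ f := fun h => hf.2 (by simp [← h])
    exact hmatch.2 _ hxyM f hf.1 hfne x (Sym2.mem_mk_left x y) hxf
  have hy0 : y ∉ covered M₀ := by
    rintro ⟨f, hf, hyf⟩
    have hfne : s(x, y) ≠ f := fun h => hf.2 (by simp [← h])
    exact hmatch.2 _ hxyM f hf.1 hfne y (Sym2.mem_mk_right x y) hyf
  have hu0 : u ∉ covered M₀ := by
    rintro ⟨f, hf, huf⟩
    have hfne : s(u, v) ≠ f := fun h => hf.2 (by simp [← h])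
    exact hmatch.2 _ heM f hf.1 hfne u (Sym2.mem_mk_left u v) huf
  have hv0 : v ∉ covered M₀ := by
    rintro ⟨f, hf, hvf⟩
    have hfne : s(u, v) ≠ f := fun h => hf.2 (by simp [← h])
    exact hmatch.2 _ heM f hf.1 hfne v (Sym2.mem_mk_right u v) hvf
  have hxM : x ∈ covered M := mem_covered_of_mem hxyM (Sym2.mem_mk_left x y)
  have hyM : y ∈ covered M := mem_covered_of_mem hxyM (Sym2.mem_mk_right x y)
  have huM : u ∈ covered M := mem_covered_of_mem heM (Sym2.mem_mk_left u v)
  have hvM : v ∈ covered M := mem_covered_of_mem heM (Sym2.mem_mk_right u v)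
  have hdisj : ∀ z : V, z ∈ (s(x, y) : Sym2 V) → z ∉ (s(u, v) : Sym2 V) :=
    fun z hz => hmatch.2 _ hxyM _ heM (Ne.symm hexy) z hz
  have hxu : x ≠ u := fun h => hdisj x (Sym2.mem_mk_left x y) (by rw [h]; exact Sym2.mem_mk_left u v)
  have hxv : x ≠ v := fun h => hdisj x (Sym2.mem_mk_left x y) (by rw [h]; exact Sym2.mem_mk_right u v)
  have hyu : y ≠ u := fun h => hdisj y (Sym2.mem_mk_right x y) (by rw [h]; exact Sym2.mem_mk_left u v)
  have hyv : y ≠ v := fun h => hdisj y (Sym2.mem_mk_right x y) (by rw [h]; exact Sym2.mem_mk_right u v)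
  have hua : u ≠ a := fun h => haM (h ▸ huM)
  have hub : u ≠ b := fun h => hbM (h ▸ huM)
  have hva : v ≠ a := fun h => haM (h ▸ hvM)
  have hvb : v ≠ b := fun h => hbM (h ▸ hvM)
  -- uncovered vertex counts
  have hcompl : (covered M)ᶜ.ncard = 2 * D := by
    have h1 : (covered M).ncard + (covered M)ᶜ.ncard = Nat.card V :=
      Set.ncard_add_ncard_compl _ (Set.toFinite _) (Set.toFinite _)
    rw [Nat.card_eq_fintype_card] at h1
    have h2 : (covered M).ncard = 2 * M.ncard := covered_ncard hmatch
    obtain ⟨m, hm⟩ := heven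
    omega
  set W : Set V := (covered M)ᶜ \ {a, b} with hWdef
  have hWsub : ∀ z ∈ W, z ∉ covered M ∧ z ≠ a ∧ z ≠ b := by
    rintro z ⟨hz1, hz2⟩
    simp only [Set.mem_insert_iff, Set.mem_singleton_iff, not_or] at hz2
    exact ⟨hz1, hz2.1, hz2.2⟩
  have hW : W.ncard = 2 * D - 2 := by
    rw [hWdef, Set.ncard_diff ?_ (Set.toFinite _), hcompl, Set.ncard_pair hab]
    rintro z (rfl | hz)
    · exact haM
    · rw [Set.mem_singleton_iff] at hz
      subst hz
      exact hbM
  -- choose w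
  set Bad : Set V := ⋃ i, ({z | s(x, z) ∈ Mc i} ∪
      {z | z ∈ W ∧ (SimpleGraph.fromEdgeSet (M₀ ∪ Mc i)).Reachable x z}) with hBadDef
  have hBadCard : Bad.ncard ≤ 2 * k := by
    refine ncard_iUnion_le_two _ fun i => ?_
    refine (Set.ncard_union_le _ _).trans ?_
    have h1 : {z | s(x, z) ∈ Mc i}.ncard ≤ 1 := by
      rw [Set.ncard_le_one (Set.toFinite _)]
      exact fun p hp q hq => matching_unique (hMc i).1 hp hq
    have h2 : {z | z ∈ W ∧ (SimpleGraph.fromEdgeSet (M₀ ∪ Mc i)).Reachable x z}.ncard ≤ 1 := by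
      rw [Set.ncard_le_one (Set.toFinite _)]
      rintro p ⟨hpW, hpR⟩ q ⟨hqW, hqR⟩
      by_contra hne
      have hp0 : p ∉ covered M₀ := fun h => (hWsub p hpW).1 (covered_mono hM₀M h)
      have hq0 : q ∉ covered M₀ := fun h => (hWsub q hqW).1 (covered_mono hM₀M h)
      exact no_three_leaves _ (fun v' a' b' c' ha' hb' hc' => union_matchings_deg hmatch₀ (hMc i).1 ha' hb' hc')
        (fun h => (hWsub p hpW).1 (by rw [← h]; exact hxM)) (fun h => (hWsub q hqW).1 (by rw [← h]; exact hxM)) hne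
        (fun _ _ ha' hb' => leaf_of_uncovered (hMc i).1 hx0 ha' hb')
        (fun _ _ ha' hb' => leaf_of_uncovered (hMc i).1 hp0 ha' hb')
        (fun _ _ ha' hb' => leaf_of_uncovered (hMc i).1 hq0 ha' hb')
        hpR hqR
    omega
  have hexw : ∃ w, w ∈ W ∧ w ∉ Bad := by
    by_contra h
    push_neg at h
    have := Set.ncard_le_ncard h (Set.toFinite Bad)
    omega
  obtain ⟨w, hwW, hwBad⟩ := hexw
  have hwM : w ∉ covered M := (hWsub w hwW).1
  have hwa : w ≠ a := (hWsub w hwW).2.1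
  have hwb : w ≠ b := (hWsub w hwW).2.2
  have hw0 : w ∉ covered M₀ := fun h => hwM (covered_mono hM₀M h)
  have hw_av : ∀ i, s(x, w) ∉ Mc i := fun i h =>
    hwBad (Set.mem_iUnion.2 ⟨i, Set.mem_union_left _ h⟩)
  have hw_reach : ∀ i, ¬(SimpleGraph.fromEdgeSet (M₀ ∪ Mc i)).Reachable x w := fun i h =>
    hwBad (Set.mem_iUnion.2 ⟨i, Set.mem_union_right _ ⟨hwW, h⟩⟩)
  have hxw : x ≠ w := fun h => hwM (h ▸ hxM)
  have hyw : y ≠ w := fun h => hwM (h ▸ hyM)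
  have huw : u ≠ w := fun h => hwM (h ▸ huM)
  have hvw : v ≠ w := fun h => hwM (h ▸ hvM)
  set M₁ : Set (Sym2 V) := insert s(x, w) M₀ with hM₁def
  have hmatch₁ : IsMatchingE M₁ := insert_matching hmatch₀ hx0 hw0 hxw
  have hcov₁ : covered M₁ = {z | z ∈ (s(x, w) : Sym2 V)} ∪ covered M₀ := covered_insert _ _
  have hy1 : y ∉ covered M₁ := by
    rw [hcov₁]
    rintro (h | h)
    · rcases Sym2.mem_iff.1 h with h' | h'
      · exact hxy h'.symm
      · exact hyw h'
    · exact hy0 h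
  -- choose w'
  set W' : Set V := W \ {w} with hW'def
  have hW' : W'.ncard = 2 * D - 3 := by
    rw [hW'def, Set.ncard_diff_singleton_of_mem hwW, hW]
    omega
  set Bad' : Set V := ⋃ i, ({z | s(y, z) ∈ Mc i} ∪
      {z | z ∈ W' ∧ (SimpleGraph.fromEdgeSet (M₁ ∪ Mc i)).Reachable y z}) with hBad'Def
  have huncov₁ : ∀ z ∈ W', z ∉ covered M₁ := by
    rintro z ⟨hzW, hzw⟩
    rw [Set.mem_singleton_iff] at hzw
    rw [hcov₁]
    rintro (h | h)
    · rcases Sym2.mem_iff.1 h with h' | h'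
      · exact (hWsub z hzW).1 (h' ▸ hxM)
      · exact hzw h'
    · exact (hWsub z hzW).1 (covered_mono hM₀M h)
  have hBad'Card : Bad'.ncard ≤ 2 * k := by
    refine ncard_iUnion_le_two _ fun i => ?_
    refine (Set.ncard_union_le _ _).trans ?_
    have h1 : {z | s(y, z) ∈ Mc i}.ncard ≤ 1 := by
      rw [Set.ncard_le_one (Set.toFinite _)]
      exact fun p hp q hq => matching_unique (hMc i).1 hp hq
    have h2 : {z | z ∈ W' ∧ (SimpleGraph.fromEdgeSet (M₁ ∪ Mc i)).Reachable y z}.ncard ≤ 1 := by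
      rw [Set.ncard_le_one (Set.toFinite _)]
      rintro p ⟨hpW, hpR⟩ q ⟨hqW, hqR⟩
      by_contra hne
      exact no_three_leaves _ (fun v' a' b' c' ha' hb' hc' => union_matchings_deg hmatch₁ (hMc i).1 ha' hb' hc')
        (fun h => (hWsub p hpW.1).1 (by rw [← h]; exact hyM)) (fun h => (hWsub q hqW.1).1 (by rw [← h]; exact hyM)) hne
        (fun _ _ ha' hb' => leaf_of_uncovered (hMc i).1 hy1 ha' hb')
        (fun _ _ ha' hb' => leaf_of_uncovered (hMc i).1 (huncov₁ p hpW) ha' hb')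
        (fun _ _ ha' hb' => leaf_of_uncovered (hMc i).1 (huncov₁ q hqW) ha' hb')
        hpR hqR
    omega
  have hexw' : ∃ w', w' ∈ W' ∧ w' ∉ Bad' := by
    by_contra h
    push_neg at h
    have := Set.ncard_le_ncard h (Set.toFinite Bad')
    omega
  obtain ⟨w', hw'W', hw'Bad⟩ := hexw'
  have hw'W : w' ∈ W := hw'W'.1
  have hw'M : w' ∉ covered M := (hWsub w' hw'W).1
  have hw'a : w' ≠ a := (hWsub w' hw'W).2.1
  have hw'b : w' ≠ b := (hWsub w' hw'W).2.2
  have hw'1 : w' ∉ covered M₁ := huncov₁ w' hw'W'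
  have hw'_av : ∀ i, s(y, w') ∉ Mc i := fun i h =>
    hw'Bad (Set.mem_iUnion.2 ⟨i, Set.mem_union_left _ h⟩)
  have hw'_reach : ∀ i, ¬(SimpleGraph.fromEdgeSet (M₁ ∪ Mc i)).Reachable y w' := fun i h =>
    hw'Bad (Set.mem_iUnion.2 ⟨i, Set.mem_union_right _ ⟨hw'W', h⟩⟩)
  have hyw' : y ≠ w' := fun h => hw'M (h ▸ hyM)
  have hxw' : x ≠ w' := fun h => hw'M (h ▸ hxM)
  have huw' : u ≠ w' := fun h => hw'M (h ▸ huM)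
  have hvw' : v ≠ w' := fun h => hw'M (h ▸ hvM)
  have hww' : w ≠ w' := fun h => hw'W'.2 (Set.mem_singleton_iff.2 h.symm)
  set M' : Set (Sym2 V) := insert s(y, w') M₁ with hM'def
  have hcov' : covered M' = {z | z ∈ (s(y, w') : Sym2 V)} ∪ covered M₁ := covered_insert _ _
  -- membership helper
  have hmemM' : ∀ f, f ∈ M' ↔ f = s(y, w') ∨ f = s(x, w) ∨ f ∈ M₀ := by
    intro f
    simp [hM'def, hM₁def, Set.mem_insert_iff]
  have hnotcov' : ∀ z : V, z ≠ y → z ≠ w' → z ≠ x → z ≠ w → z ∉ covered M₀ → z ∉ covered M' := by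
    intro z h1 h2 h3 h4 h5
    rw [hcov', hcov₁]
    rintro (h | h | h)
    · rcases Sym2.mem_iff.1 h with h' | h' <;> [exact h1 h'; exact h2 h']
    · rcases Sym2.mem_iff.1 h with h' | h' <;> [exact h3 h'; exact h4 h']
    · exact h5 h
  have hxyM₀' : s(x, w) ∉ M₀ := fun h => hx0 (mem_covered_of_mem h (Sym2.mem_mk_left x w))
  have hyw'M₁ : s(y, w') ∉ M₁ := by
    intro h
    rcases Set.mem_insert_iff.1 h with h' | h'
    · rcases Sym2.eq_iff.1 h' with ⟨h1, -⟩ | ⟨h1, -⟩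
      · exact hxy h1.symm
      · exact hyw h1
    · exact hy0 (mem_covered_of_mem h' (Sym2.mem_mk_left y w'))
  refine ⟨M', ⟨⟨?_, ?_, ?_⟩, ?_, ?_, ?_, ?_⟩, ?_, ?_⟩
  · -- matching
    exact insert_matching hmatch₁ hy1 hw'1 hyw'
  · -- available
    intro f hf
    rcases (hmemM' f).1 hf with rfl | rfl | h
    · exact ⟨by simpa using hyw', hw'_av⟩
    · exact ⟨by simpa using hxw, hw_av⟩
    · exact hM.2.1 f (hM₀M h)
  · -- acyclic
    intro i
    have hbase : (SimpleGraph.fromEdgeSet (M₀ ∪ Mc i)).IsAcyclic :=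
      acyclic_mono (SimpleGraph.fromEdgeSet_mono (Set.union_subset_union_left _ hM₀M))
        (hM.2.2 i)
    have h1 : (SimpleGraph.fromEdgeSet (insert s(x, w) (M₀ ∪ Mc i))).IsAcyclic :=
      acyclic_insert hxw hbase (hw_reach i)
    have h2 : (SimpleGraph.fromEdgeSet (insert s(y, w') (insert s(x, w) (M₀ ∪ Mc i)))).IsAcyclic := by
      refine acyclic_insert hyw' h1 ?_
      rw [← Set.insert_union]
      exact hw'_reach i
    have heq : M' ∪ Mc i = insert s(y, w') (insert s(x, w) (M₀ ∪ Mc i)) := by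
      rw [hM'def, hM₁def, Set.insert_union, Set.insert_union]
    rw [heq]
    exact h2
  · -- cardinality
    have hpairsub : ({s(x, y), s(u, v)} : Set (Sym2 V)) ⊆ M := by
      rintro f (rfl | hf)
      · exact hxyM
      · rw [Set.mem_singleton_iff] at hf
        subst hf
        exact heM
    have hM₀card : M₀.ncard = M.ncard - 2 := by
      rw [hM₀def, Set.ncard_diff hpairsub (Set.toFinite _), Set.ncard_pair (Ne.symm hexy)]
    have hM₁card : M₁.ncard = M₀.ncard + 1 :=
      Set.ncard_insert_of_notMem hxyM₀' (Set.toFinite _)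
    have hM'card : M'.ncard = M₁.ncard + 1 :=
      Set.ncard_insert_of_notMem hyw'M₁ (Set.toFinite _)
    obtain ⟨m, hm⟩ := heven
    rw [hM'card, hM₁card, hM₀card, hMcard]
    omega
  · -- a uncovered
    exact hnotcov' a (Ne.symm hya) (Ne.symm hw'a) (Ne.symm hxa) (Ne.symm hwa)
      (fun h => haM (covered_mono hM₀M h))
  · -- b uncovered
    exact hnotcov' b (Ne.symm hyb) (Ne.symm hw'b) (Ne.symm hxb) (Ne.symm hwb)
      (fun h => hbM (covered_mono hM₀M h))
  · -- T ⊆ M'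
    intro f hfT
    have hfM : f ∈ M := hTM hfT
    have hf1 : f ≠ s(x, y) := fun h => hxyT (h ▸ hfT)
    have hf2 : f ≠ s(u, v) := fun h => heT (h ▸ hfT)
    have : f ∈ M₀ := ⟨hfM, by simp [hf1, hf2]⟩
    exact (hmemM' f).2 (Or.inr (Or.inr this))
  · -- endpoints of e uncovered
    intro z hz
    rcases Sym2.mem_iff.1 hz with h | h
    · rw [h]
      exact hnotcov' u (Ne.symm hyu) huw' (Ne.symm hxu) huw hu0
    · rw [h]
      exact hnotcov' v (Ne.symm hyv) hvw' (Ne.symm hxv) hvw hv0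
  · -- reconstruction
    ext f
    constructor
    · rintro (⟨hf, hfxy⟩ | rfl | hf)
      · rcases (hmemM' f).1 hf with rfl | rfl | h
        · exact absurd (Or.inr (Sym2.mem_mk_left y w')) hfxy
        · exact absurd (Or.inl (Sym2.mem_mk_left x w)) hfxy
        · exact hM₀M h
      · exact hxyM
      · rw [Set.mem_singleton_iff] at hf
        subst hf
        exact heM
    · intro hfM
      by_cases h1 : f = s(x, y)
      · exact Or.inr (Or.inl h1)
      by_cases h2 : f = s(u, v)
      · exact Or.inr (Or.inr (Set.mem_singleton_iff.2 h2))
      have hfM₀ : f ∈ M₀ := ⟨hfM, by simp [h1, h2]⟩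
      refine Or.inl ⟨(hmemM' f).2 (Or.inr (Or.inr hfM₀)), ?_⟩
      rintro (h | h)
      · exact hx0 (mem_covered_of_mem hfM₀ h)
      · exact hy0 (mem_covered_of_mem hfM₀ h)

set_option maxHeartbeats 1000000 in
theorem main_count [Fintype V] {k : ℕ} {Mc : Fin k → Set (Sym2 V)} (hMc : IsConfig Mc)
    {D : ℕ} (hD : 2 * k + 2 ≤ D)
    (heven : Even (Fintype.card V)) (hn : 40 * D + 40 ≤ Fintype.card V)
    {a b x y : V} (hab : a ≠ b) (hxy : x ≠ y)
    (hxa : x ≠ a) (hxb : x ≠ b) (hya : y ≠ a) (hyb : y ≠ b)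
    {ℓ : ℕ} {T : Set (Sym2 V)} (hℓ : 10 * ℓ ≤ Fintype.card V)
    (hTcard : T.ncard = ℓ) (hxT : s(x, y) ∉ T) :
    ({M : Set (Sym2 V) | IsRedMatching Mc M ∧ M.ncard = Fintype.card V / 2 - D ∧
        a ∉ covered M ∧ b ∉ covered M ∧ T ⊆ M ∧ s(x, y) ∈ M}.ncard) * (Fintype.card V) ≤
      ({M : Set (Sym2 V) | IsRedMatching Mc M ∧ M.ncard = Fintype.card V / 2 - D ∧
        a ∉ covered M ∧ b ∉ covered M ∧ T ⊆ M}.ncard) * (32 * D ^ 2) := by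
  set n := Fintype.card V with hndef
  set A : Set (Set (Sym2 V)) := {M : Set (Sym2 V) | IsRedMatching Mc M ∧ M.ncard = n / 2 - D ∧
        a ∉ covered M ∧ b ∉ covered M ∧ T ⊆ M ∧ s(x, y) ∈ M} with hAdef
  set B : Set (Set (Sym2 V)) := {M : Set (Sym2 V) | IsRedMatching Mc M ∧ M.ncard = n / 2 - D ∧
        a ∉ covered M ∧ b ∉ covered M ∧ T ⊆ M} with hBdef
  set Q : ℕ := n / 2 - D - (ℓ + 1) with hQdef
  -- the exchange specification
  set Spec : Set (Sym2 V) → Sym2 V → Set (Sym2 V) → Prop := fun M e M' =>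
    (IsRedMatching Mc M' ∧ M'.ncard = n / 2 - D ∧
      a ∉ covered M' ∧ b ∉ covered M' ∧ T ⊆ M') ∧
      (∀ v ∈ e, v ∉ covered M') ∧
      ({f ∈ M' | ¬(x ∈ f ∨ y ∈ f)} ∪ {s(x, y), e} = M) with hSpecdef
  classical
  set Af : Finset (Set (Sym2 V)) := (Set.toFinite A).toFinset with hAf
  set Bf : Finset (Set (Sym2 V)) := (Set.toFinite B).toFinset with hBf
  set P : Finset (Set (Sym2 V) × Sym2 V) :=
    (Af ×ˢ (Finset.univ : Finset (Sym2 V))).filter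
      (fun p => p.2 ∈ p.1 ∧ p.2 ∉ T ∧ p.2 ≠ s(x, y)) with hPdef
  have hPmem : ∀ p : Set (Sym2 V) × Sym2 V,
      p ∈ P ↔ p.1 ∈ A ∧ p.2 ∈ p.1 ∧ p.2 ∉ T ∧ p.2 ≠ s(x, y) := by
    intro p
    simp only [hPdef, Finset.mem_filter, Finset.mem_product, Finset.mem_univ, true_and,
      hAf, Set.Finite.mem_toFinset]
    tauto
  have hSpecEx : ∀ p ∈ P, ∃ M', Spec p.1 p.2 M' := by
    intro p hp
    rw [hPmem] at hp
    obtain ⟨hpA, hpe, hpT, hpxy⟩ := hp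
    obtain ⟨hred, hcard, haM, hbM, hTM, hxyM⟩ := hpA
    exact exchange hMc hD heven (by omega) hab hxy hxa hxb hya hyb hTM hred hcard
      haM hbM hxyM hxT hpe hpT hpxy
  set F : Set (Sym2 V) × Sym2 V → Set (Sym2 V) := fun p =>
    if h : ∃ M', Spec p.1 p.2 M' then h.choose else ∅ with hFdef
  have hFspec : ∀ p ∈ P, Spec p.1 p.2 (F p) := by
    intro p hp
    have h := hSpecEx p hp
    simp only [hFdef, dif_pos h]
    exact h.choose_spec
  have hFmaps : ∀ p ∈ P, F p ∈ Bf := by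
    intro p hp
    have h := (hFspec p hp).1
    rw [hBf, Set.Finite.mem_toFinset]
    exact h
  -- lower bound
  have hlow : Af.card * Q ≤ P.card := by
    rw [Finset.card_eq_sum_card_fiberwise (f := Prod.fst) (t := Af)
      (fun p hp => by
        rw [hPdef] at hp
        exact (Finset.mem_product.1 (Finset.mem_filter.1 hp).1).1)]
    have hfib : ∀ M ∈ Af, Q ≤ (P.filter (fun p => p.1 = M)).card := by
      intro M hMAf
      have hMA : M ∈ A := (Set.Finite.mem_toFinset _).1 hMAf
      set EM : Finset (Sym2 V) :=
        (Set.toFinite M).toFinset \ ((Set.toFinite T).toFinset ∪ {s(x, y)}) with hEM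
      have hinj : EM.card ≤ (P.filter (fun p => p.1 = M)).card := by
        refine Finset.card_le_card_of_injOn (fun e => (M, e)) ?_ ?_
        · intro e he
          rw [Finset.mem_coe, hEM, Finset.mem_sdiff, Set.Finite.mem_toFinset, Finset.mem_union,
            Finset.mem_singleton, Set.Finite.mem_toFinset] at he
          push_neg at he
          rw [Finset.mem_coe, Finset.mem_filter, hPmem]
          exact ⟨⟨hMA, he.1, he.2.1, he.2.2⟩, rfl⟩
        · intro e₁ _ e₂ _ h
          exact congrArg Prod.snd h
      refine le_trans ?_ hinj
      have h1 : ((Set.toFinite M).toFinset).card = n / 2 - D := by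
        rw [← Set.ncard_eq_toFinset_card]
        exact hMA.2.1
      have h2 : ((Set.toFinite T).toFinset ∪ {s(x, y)}).card ≤ ℓ + 1 := by
        refine (Finset.card_union_le _ _).trans ?_
        rw [← Set.ncard_eq_toFinset_card, hTcard, Finset.card_singleton]
      have := Finset.le_card_sdiff ((Set.toFinite T).toFinset ∪ {s(x, y)})
        ((Set.toFinite M).toFinset)
      rw [← hEM] at this
      omega
    calc Af.card * Q = ∑ _M ∈ Af, Q := by rw [Finset.sum_const, smul_eq_mul]
      _ ≤ _ := Finset.sum_le_sum hfib
  -- upper bound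
  have hup : P.card ≤ Bf.card * (2 * D * (2 * D)) := by
    rw [Finset.card_eq_sum_card_fiberwise (f := F) (t := Bf) hFmaps]
    have hfib : ∀ M' ∈ Bf, (P.filter (fun p => F p = M')).card ≤ 2 * D * (2 * D) := by
      intro M' hM'Bf
      have hM'B : M' ∈ B := (Set.Finite.mem_toFinset _).1 hM'Bf
      have hUcard : ((covered M')ᶜ : Set V).ncard = 2 * D := by
        have h1 : (covered M').ncard + (covered M')ᶜ.ncard = Nat.card V :=
          Set.ncard_add_ncard_compl _ (Set.toFinite _) (Set.toFinite _)
        rw [Nat.card_eq_fintype_card] at h1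
        have h2 : (covered M').ncard = 2 * M'.ncard := covered_ncard hM'B.1.1
        have h3 : M'.ncard = n / 2 - D := hM'B.2.1
        obtain ⟨m, hm⟩ := heven
        omega
      have hcount : {e : Sym2 V | ∀ v ∈ e, v ∈ ((covered M')ᶜ : Set V)}.ncard ≤
          2 * D * (2 * D) := by
        have := sym2_count ((covered M')ᶜ : Set V)
        rw [hUcard] at this
        exact this
      refine le_trans ?_ hcount
      rw [Set.ncard_eq_toFinset_card {e : Sym2 V | ∀ v ∈ e, v ∈ ((covered M')ᶜ : Set V)}
        (Set.toFinite _)]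
      refine Finset.card_le_card_of_injOn Prod.snd ?_ ?_
      · intro p hp
        rw [Finset.mem_coe, Finset.mem_filter] at hp
        obtain ⟨hpP, hpF⟩ := hp
        have hs := hFspec p hpP
        rw [hpF] at hs
        rw [Finset.mem_coe, Set.Finite.mem_toFinset]
        intro v hv
        rw [Set.mem_compl_iff]
        exact hs.2.1 v hv
      · intro p hp q hq hpq
        rw [Finset.mem_coe, Finset.mem_filter] at hp hq
        have hsp := hFspec p hp.1
        have hsq := hFspec q hq.1
        rw [hp.2] at hsp
        rw [hq.2] at hsq
        have h1 : p.1 = q.1 := by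
          rw [← hsp.2.2, ← hsq.2.2, hpq]
        exact Prod.ext h1 hpq
    calc _ ≤ ∑ _M' ∈ Bf, 2 * D * (2 * D) := Finset.sum_le_sum hfib
      _ = Bf.card * (2 * D * (2 * D)) := by rw [Finset.sum_const, smul_eq_mul]
  have hAcard : A.ncard = Af.card := Set.ncard_eq_toFinset_card _ _
  have hBcard : B.ncard = Bf.card := Set.ncard_eq_toFinset_card _ _
  have hkey : A.ncard * Q ≤ B.ncard * (2 * D * (2 * D)) := by
    rw [hAcard, hBcard]
    exact hlow.trans hup
  have hnQ : n ≤ 8 * Q := by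
    obtain ⟨m, hm⟩ := heven
    omega
  calc A.ncard * n ≤ A.ncard * (8 * Q) := Nat.mul_le_mul_left _ hnQ
    _ = 8 * (A.ncard * Q) := by ring
    _ ≤ 8 * (B.ncard * (2 * D * (2 * D))) := Nat.mul_le_mul_left _ hkey
    _ = B.ncard * (32 * D ^ 2) := by ring




/-- For `k ≥ 2` and `D` sufficiently large in terms of `k` there are
`c = c(k, D)` and `n₀` such that for all even `n ≥ n₀`: for any `k`-configuration of order `n`,
available edge `ab`, red matching `T` of size `ℓ ≤ n/10` avoiding `a` and `b`, and distinct
vertices `x, y` not covered by `T`, a uniformly random red matching `M*` of size `n/2 - D`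
satisfies `P[xy ∈ M* | a, b ∉ V(M*) ∧ T ⊆ M*] ≤ c/n`. -/
theorem conditional_edge_probability (k : ℕ) (hk : 2 ≤ k) :
    ∃ D₀ : ℕ, ∀ D : ℕ, D₀ ≤ D → ∃ c : ℝ, 0 < c ∧ ∃ n₀ : ℕ,
      ∀ (V : Type) [Fintype V],
        Even (Fintype.card V) → n₀ ≤ Fintype.card V →
        ∀ Mc : Fin k → Set (Sym2 V), IsConfig Mc →
        ∀ a b : V, a ≠ b → Available Mc s(a, b) →
        ∀ (ℓ : ℕ) (T : Set (Sym2 V)), 10 * ℓ ≤ Fintype.card V →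
          IsRedMatching Mc T → T.ncard = ℓ →
          (∀ f ∈ T, a ∉ f ∧ b ∉ f) →
          ∀ x y : V, x ≠ y → x ∉ covered T → y ∉ covered T →
            ({M : Set (Sym2 V) | IsRedMatching Mc M ∧ M.ncard = Fintype.card V / 2 - D ∧
                a ∉ covered M ∧ b ∉ covered M ∧ T ⊆ M ∧ s(x, y) ∈ M}.ncard : ℝ) /
              ({M : Set (Sym2 V) | IsRedMatching Mc M ∧ M.ncard = Fintype.card V / 2 - D ∧
                a ∉ covered M ∧ b ∉ covered M ∧ T ⊆ M}.ncard : ℝ) ≤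
            c / (Fintype.card V : ℝ) := by
  refine ⟨2 * k + 2, fun D hD => ⟨32 * D ^ 2, ?_, 40 * D + 40, ?_⟩⟩
  · have hDpos : 0 < D := by omega
    positivity
  intro V _ heven hn Mc hMc a b hab _hav ℓ T hℓ _hTred hTcard _hTab x y hxy hxT hyT
  set A : Set (Set (Sym2 V)) := {M : Set (Sym2 V) | IsRedMatching Mc M ∧
      M.ncard = Fintype.card V / 2 - D ∧
      a ∉ covered M ∧ b ∉ covered M ∧ T ⊆ M ∧ s(x, y) ∈ M} with hAdef
  set B : Set (Set (Sym2 V)) := {M : Set (Sym2 V) | IsRedMatching Mc M ∧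
      M.ncard = Fintype.card V / 2 - D ∧
      a ∉ covered M ∧ b ∉ covered M ∧ T ⊆ M} with hBdef
  have hnpos : (0 : ℝ) < (Fintype.card V : ℝ) := by
    have : 0 < Fintype.card V := by omega
    exact_mod_cast this
  have hcn : (0 : ℝ) ≤ (32 * D ^ 2 : ℝ) / (Fintype.card V : ℝ) := by
    have hDpos : 0 < D := by omega
    positivity
  have hTne : s(x, y) ∉ T := fun h => hxT ⟨_, h, Sym2.mem_mk_left x y⟩
  have hAB : A ⊆ B := fun M hM => ⟨hM.1, hM.2.1, hM.2.2.1, hM.2.2.2.1, hM.2.2.2.2.1⟩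
  by_cases hbad : x = a ∨ x = b ∨ y = a ∨ y = b
  · have hA : A = ∅ := by
      ext M
      simp only [hAdef, Set.mem_setOf_eq, Set.mem_empty_iff_false, iff_false]
      rintro ⟨hred, hcard, haM, hbM, hTM, hxyM⟩
      rcases hbad with h | h | h | h
      · exact haM ⟨_, hxyM, by rw [← h]; exact Sym2.mem_mk_left x y⟩
      · exact hbM ⟨_, hxyM, by rw [← h]; exact Sym2.mem_mk_left x y⟩
      · exact haM ⟨_, hxyM, by rw [← h]; exact Sym2.mem_mk_right x y⟩
      · exact hbM ⟨_, hxyM, by rw [← h]; exact Sym2.mem_mk_right x y⟩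
    rw [hA]
    simp only [Set.ncard_empty, Nat.cast_zero, zero_div]
    exact hcn
  · push_neg at hbad
    obtain ⟨hxa, hxb, hya, hyb⟩ := hbad
    have hkey := main_count hMc hD heven hn hab hxy hxa hxb hya hyb hℓ hTcard hTne
    rcases eq_or_ne B.ncard 0 with hB | hB
    · have hA0 : A.ncard = 0 := by
        have := Set.ncard_le_ncard hAB (Set.toFinite B)
        omega
      rw [hA0, hB]
      simp only [Nat.cast_zero, div_zero, zero_div]
      exact hcn
    · have hBpos : (0 : ℝ) < (B.ncard : ℝ) := by
        have : 0 < B.ncard := Nat.pos_of_ne_zero hB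
        exact_mod_cast this
      rw [div_le_div_iff₀ hBpos hnpos]
      have hcast : ((A.ncard * Fintype.card V : ℕ) : ℝ) ≤
          ((B.ncard * (32 * D ^ 2) : ℕ) : ℝ) := by exact_mod_cast hkey
      push_cast at hcast
      linarith


end Kotzig
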